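/- arXiv:1611.03639 — 4 statements merged into one kernel-verified Lean document; each statement's English description precedes it below -/
import Mathlib

section
/- For all integers ℓ and all τ ∈ (2,3), one has (τ-2)^(ℓ+1) + (τ-2)^(-ℓ) ≥ τ - 1. -/
open Real

theorem stmt_0 (τ : ℝ) (hτ1 : 2 < τ) (hτ2 : τ < 3) (ℓ : ℤ) :
    (τ - 2) ^ ((ℓ : ℝ) + 1) + (τ - 2) ^ (-(ℓ : ℝ)) ≥ τ - 1 := by
  set x : ℝ := τ - 2 with hx
  have hx0 : 0 < x := by simp [hx]; linarith
  have hx1 : x < 1 := by simp [hx]; linarith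
  set a : ℝ := x ^ (ℓ : ℝ) with ha
  have ha0 : 0 < a := Real.rpow_pos_of_pos hx0 _
  have h1 : x ^ ((ℓ : ℝ) + 1) = a * x := by
    rw [ha, Real.rpow_add_one hx0.ne']
  have h2 : x ^ (-(ℓ : ℝ)) = a⁻¹ := by
    rw [ha, Real.rpow_neg hx0.le]
  have key : (a - 1) * (a * x - 1) ≥ 0 := by
    rcases le_or_gt 0 ℓ with h | h
    · have h3 : a ≤ 1 := Real.rpow_le_one hx0.le hx1.le (by exact_mod_cast h)
      have h4 : a * x ≤ 1 := by nlinarith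
      nlinarith
    · have h5 : ((ℓ : ℝ) + 1) ≤ 0 := by exact_mod_cast Int.lt_iff_add_one_le.mp h
      have h3 : 1 ≤ a := Real.one_le_rpow_of_pos_of_le_one_of_nonpos hx0 hx1.le
        (by exact_mod_cast h.le)
      have h4 : 1 ≤ a * x := by
        rw [← h1]
        exact Real.one_le_rpow_of_pos_of_le_one_of_nonpos hx0 hx1.le h5
      nlinarith
  rw [h1, h2]
  rw [ge_iff_le, ← sub_nonneg]
  have : a * x + a⁻¹ - (τ - 1) = ((a - 1) * (a * x - 1)) / a := by
    field_simp
    ring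
  rw [this]
  positivity
end

section
/- For all τ ∈ (2,3), all b_r, b_b ∈ [0,1), and all integers ℓ: (τ-2)^(b_r+ℓ) + (τ-2)^(b_b-ℓ-1) ≥ τ - 1, i.e. the value (τ-2)^(b_r+ℓ) + (τ-2)^(b_b-ℓ-1) divided by (τ-1) is at least 1. -/
/-!
Put `x = τ - 2 ∈ (0, 1)`, so `τ - 1 = x + 1`. Since `t ↦ x ^ t` is antitone and `b_r, b_b ≤ 1`,
the sum is at least `x ^ (ℓ + 1) + x ^ (-ℓ)`. With `y = x ^ ℓ` this is `x y + y⁻¹`, and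
`x y + y⁻¹ - (x + 1) = (x y - 1)(y - 1) / y`, which is nonnegative because for an integer `ℓ`
either `ℓ ≥ 0` (so `x y ≤ y ≤ 1`) or `ℓ ≤ -1` (so `1 ≤ x y ≤ y`).
-/

open Real

section

variable {K : Type*} [Field K] [LinearOrder K] [IsStrictOrderedRing K]

lemma add_one_le_mul_add_inv {x y : K} (hy : 0 < y) (h : 0 ≤ (x * y - 1) * (y - 1)) :
    x + 1 ≤ x * y + y⁻¹ := by
  have key : x * y + y⁻¹ - (x + 1) = (x * y - 1) * (y - 1) / y := by
    field_simp
    ring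
  have : 0 ≤ x * y + y⁻¹ - (x + 1) := key ▸ div_nonneg h hy.le
  linarith

lemma add_one_le_zpow_add_one_add_zpow_neg {x : K} (hx0 : 0 < x) (hx1 : x ≤ 1) (n : ℤ) :
    x + 1 ≤ x ^ (n + 1) + x ^ (-n) := by
  rw [zpow_add_one₀ hx0.ne', zpow_neg, mul_comm]
  refine add_one_le_mul_add_inv (zpow_pos hx0 n) ?_
  rcases le_or_gt 0 n with hn | hn
  · have hy : x ^ n ≤ 1 := zpow_le_one₀ hx0 hx1 hn
    have hxy : x * x ^ n ≤ 1 := mul_le_one₀ hx1 (zpow_pos hx0 n).le hy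
    exact mul_nonneg_of_nonpos_of_nonpos (by linarith) (by linarith)
  · have hxy : 1 ≤ x * x ^ n := by
      rw [mul_comm, ← zpow_add_one₀ hx0.ne']
      exact one_le_zpow_of_nonpos₀ hx0 hx1 (by omega)
    have hy : 1 ≤ x ^ n := hxy.trans (mul_le_of_le_one_left (zpow_pos hx0 n).le hx1)
    exact mul_nonneg (by linarith) (by linarith)

end

theorem stmt_2_general (τ b_r b_b : ℝ) (hτ1 : 2 < τ) (hτ2 : τ < 3)
    (hbr1 : b_r < 1) (hbb1 : b_b < 1)
    (ℓ : ℤ) :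
    (τ - 2) ^ (b_r + (ℓ : ℝ)) + (τ - 2) ^ (b_b - (ℓ : ℝ) - 1) ≥ τ - 1 := by
  set x := τ - 2
  have hx0 : 0 < x := by linarith
  have hx1 : x ≤ 1 := by linarith
  calc τ - 1 = x + 1 := by ring
    _ ≤ x ^ (ℓ + 1) + x ^ (-ℓ) := add_one_le_zpow_add_one_add_zpow_neg hx0 hx1 ℓ
    _ = x ^ ((ℓ : ℝ) + 1) + x ^ (-(ℓ : ℝ)) := by
      rw [← rpow_intCast, ← rpow_intCast]
      push_cast
      rfl
    _ ≤ x ^ (b_r + (ℓ : ℝ)) + x ^ (b_b - (ℓ : ℝ) - 1) :=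
      add_le_add (rpow_le_rpow_of_exponent_ge hx0 hx1 (by linarith))
        (rpow_le_rpow_of_exponent_ge hx0 hx1 (by linarith))

theorem stmt_2 (τ b_r b_b : ℝ) (hτ1 : 2 < τ) (hτ2 : τ < 3)
    (hbr0 : 0 ≤ b_r) (hbr1 : b_r < 1) (hbb0 : 0 ≤ b_b) (hbb1 : b_b < 1)
    (ℓ : ℤ) :
    (τ - 2) ^ (b_r + (ℓ : ℝ)) + (τ - 2) ^ (b_b - (ℓ : ℝ) - 1) ≥ τ - 1 :=
  stmt_2_general τ b_r b_b hτ1 hτ2 hbr1 hbb1 ℓ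
end

section
/- Let X₁, ..., X_m be i.i.d. nonnegative integer-valued random variables with tail P(X₁ > x) = L(x) x^{-(τ-2)} for x ≥ 1, where exp(−C(log x)^η) ≤ L(x) ≤ exp(C(log x)^η) for some C > 0, η ∈ (0,1), and τ ∈ (2,3). Let h(m) = exp((2C/(τ-2)^η)(log m)^η). Then P(max_{i≤m} X_i < (m/h(m))^{1/(τ-2)}) ≤ exp(−exp((C/(τ-2)^η)(log m)^η)). -/
/-!
Let `y` be the threshold `(m / h(m))^{1/(τ-2)}`. By independence,
`P(max X_i < y) ≤ (1 - P(X_1 > y))^m ≤ exp(-m P(X_1 > y))`, and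
`m P(X_1 > y) = L(y) h(m)`. Since `log y ≤ log m / (τ - 2)`, the lower bound on `L` gives
`L(y) ≥ exp(-(C/(τ-2)^η) (log m)^η)`, which is the square root of `1/h(m)`, so
`m P(X_1 > y) ≥ exp((C/(τ-2)^η) (log m)^η)`. If `y ≤ 1` the event is null, because the lower
bound on `L` at `1` forces `P(X_1 > 1) = 1`.
-/

open Real MeasureTheory ProbabilityTheory

open scoped ENNReal

theorem measure_forall_lt_le_one_sub_pow {Ω ι : Type*} [MeasurableSpace Ω] {μ : Measure Ω}
    [IsProbabilityMeasure μ] [Fintype ι] {X : ι → Ω → ℝ} (hmeas : ∀ i, Measurable (X i))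
    (hindep : iIndepFun X μ) {y : ℝ} {p : ℝ≥0∞} (hp : ∀ i, p ≤ μ {ω | y < X i ω}) :
    μ {ω | ∀ i, X i ω < y} ≤ (1 - p) ^ Fintype.card ι := by
  have hinter : {ω | ∀ i, X i ω < y} = ⋂ i, X i ⁻¹' Set.Iio y := by ext; simp
  rw [hinter, hindep.meas_iInter fun i => ⟨Set.Iio y, measurableSet_Iio, rfl⟩,
    ← Finset.card_univ, ← Finset.prod_const]
  gcongr with i
  calc μ (X i ⁻¹' Set.Iio y) ≤ μ {ω | y < X i ω}ᶜ :=
        measure_mono fun _ h => by simpa using le_of_lt h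
    _ = 1 - μ {ω | y < X i ω} :=
        prob_compl_eq_one_sub (measurableSet_lt measurable_const (hmeas i))
    _ ≤ 1 - p := tsub_le_tsub_left (hp i) 1

theorem one_sub_ofReal_pow_le_exp {p : ℝ} (hp : 0 ≤ p) (n : ℕ) :
    (1 - ENNReal.ofReal p) ^ n ≤ ENNReal.ofReal (exp (-(n * p))) :=
  calc (1 - ENNReal.ofReal p) ^ n = ENNReal.ofReal (1 - p) ^ n := by
        rw [← ENNReal.ofReal_one, ← ENNReal.ofReal_sub _ hp]
    _ ≤ ENNReal.ofReal (exp (-p)) ^ n := by gcongr; linarith [add_one_le_exp (-p)]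
    _ = ENNReal.ofReal (exp (-(n * p))) := by
        rw [← ENNReal.ofReal_pow (exp_pos _).le, ← exp_nat_mul, mul_neg]

section Threshold

variable {n κ η C : ℝ}

theorem log_rpow_inv_div_exp_le (hn : 0 < n) (hκ : 0 < κ) {t : ℝ} (ht : 0 ≤ t) :
    log ((n / exp t) ^ (1 / κ)) ≤ log n / κ := by
  rw [log_rpow (by positivity), log_div hn.ne' (exp_pos t).ne', log_exp, one_div_mul_eq_div]
  gcongr
  linarith

theorem rpow_inv_div_exp_rpow_neg (hn : 0 < n) (hκ : 0 < κ) (t : ℝ) :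
    ((n / exp t) ^ (1 / κ)) ^ (-κ) = exp t / n := by
  rw [rpow_neg (by positivity), one_div, rpow_inv_rpow (by positivity) hκ.ne', inv_div]

theorem exp_le_mul_tail_at_threshold (hn : 1 ≤ n) (hκ : 0 < κ) (hη : 0 ≤ η) (hC : 0 ≤ C)
    {ℓ : ℝ} (hy : 1 ≤ (n / exp (2 * C / κ ^ η * log n ^ η)) ^ (1 / κ))
    (hℓ : exp (-C * log ((n / exp (2 * C / κ ^ η * log n ^ η)) ^ (1 / κ)) ^ η) ≤ ℓ) :
    exp (C / κ ^ η * log n ^ η) ≤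
      n * (ℓ * ((n / exp (2 * C / κ ^ η * log n ^ η)) ^ (1 / κ)) ^ (-κ)) := by
  set t := 2 * C / κ ^ η * log n ^ η with ht_def
  have hn0 : 0 < n := one_pos.trans_le hn
  have hlogn : 0 ≤ log n := log_nonneg hn
  have ht : 0 ≤ t := by positivity
  have hlogy : log ((n / exp t) ^ (1 / κ)) ^ η ≤ log n ^ η / κ ^ η := by
    rw [← div_rpow hlogn hκ.le]
    exact rpow_le_rpow (log_nonneg hy) (log_rpow_inv_div_exp_le hn0 hκ ht) hη
  have hℓ' : exp (-C * (log n ^ η / κ ^ η)) ≤ ℓ :=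
    (exp_le_exp.2 (by nlinarith)).trans hℓ
  calc exp (C / κ ^ η * log n ^ η) = exp (-C * (log n ^ η / κ ^ η)) * exp t := by
        rw [← exp_add, ht_def]; ring_nf
    _ ≤ ℓ * exp t := by gcongr
    _ = n * (ℓ * ((n / exp t) ^ (1 / κ)) ^ (-κ)) := by
        rw [rpow_inv_div_exp_rpow_neg hn0 hκ]; field_simp

end Threshold

theorem stmt_8_general {Ω : Type*} [MeasurableSpace Ω] (μ : Measure Ω) [IsProbabilityMeasure μ]
    (m : ℕ) (hm : 2 ≤ m) (τ η C : ℝ)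
    (hτ1 : 2 < τ) (hη0 : 0 < η) (hC : 0 < C)
    (X : Fin m → Ω → ℝ) (hmeas : ∀ i, Measurable (X i))
    (hindep : iIndepFun X μ)
    (L : ℝ → ℝ)
    (hL : ∀ x : ℝ, 1 ≤ x →
      Real.exp (-C * (Real.log x) ^ η) ≤ L x ∧ L x ≤ Real.exp (C * (Real.log x) ^ η))
    (htail : ∀ i, ∀ x : ℝ, 1 ≤ x →
      μ {ω | x < X i ω} = ENNReal.ofReal (L x * x ^ (-(τ - 2)))) :
    μ {ω | ∀ i, X i ω <
        ((m : ℝ) / Real.exp ((2 * C / (τ - 2) ^ η) * (Real.log m) ^ η)) ^ (1 / (τ - 2))}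
      ≤ ENNReal.ofReal
          (Real.exp (-(Real.exp ((C / (τ - 2) ^ η) * (Real.log m) ^ η)))) := by
  set y := ((m : ℝ) / exp ((2 * C / (τ - 2) ^ η) * log m ^ η)) ^ (1 / (τ - 2))
  have hm1 : (1 : ℝ) ≤ m := by exact_mod_cast one_le_two.trans hm
  rcases le_or_gt y 1 with hy | hy
  · have htail_one : ∀ i, 1 ≤ μ {ω | 1 < X i ω} := fun i => by
      have hL1 := (hL 1 le_rfl).1
      rw [log_one, zero_rpow hη0.ne', mul_zero, exp_zero] at hL1
      rw [htail i 1 le_rfl, one_rpow, mul_one]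
      exact ENNReal.one_le_ofReal.2 hL1
    calc μ {ω | ∀ i, X i ω < y} ≤ μ {ω | ∀ i, X i ω < 1} :=
          measure_mono fun ω h i => (h i).trans_le hy
      _ ≤ (1 - 1) ^ m := by simpa using measure_forall_lt_le_one_sub_pow hmeas hindep htail_one
      _ ≤ _ := by simp [zero_pow (by omega : m ≠ 0)]
  · set q := exp (C / (τ - 2) ^ η * log m ^ η)
    have hp : ∀ i, ENNReal.ofReal (q / m) ≤ μ {ω | y < X i ω} := fun i => by
      rw [htail i y hy.le]
      refine ENNReal.ofReal_le_ofReal ((div_le_iff₀' (by positivity)).2 ?_)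
      exact exp_le_mul_tail_at_threshold hm1 (by linarith) hη0.le hC.le hy.le (hL y hy.le).1
    calc μ {ω | ∀ i, X i ω < y} ≤ (1 - ENNReal.ofReal (q / m)) ^ m := by
          simpa using measure_forall_lt_le_one_sub_pow hmeas hindep hp
      _ ≤ ENNReal.ofReal (exp (-(m * (q / m)))) := one_sub_ofReal_pow_le_exp (by positivity) m
      _ = ENNReal.ofReal (exp (-q)) := by rw [mul_div_cancel₀ _ (by positivity)]

theorem stmt_8 {Ω : Type*} [MeasurableSpace Ω] (μ : Measure Ω) [IsProbabilityMeasure μ]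
    (m : ℕ) (hm : 2 ≤ m) (τ η C : ℝ)
    (hτ1 : 2 < τ) (hτ2 : τ < 3) (hη0 : 0 < η) (hη1 : η < 1) (hC : 0 < C)
    (X : Fin m → Ω → ℝ) (hmeas : ∀ i, Measurable (X i))
    (hnonneg : ∀ i ω, 0 ≤ X i ω)
    (hint : ∀ i ω, ∃ k : ℕ, X i ω = k)
    (hindep : iIndepFun X μ)
    (L : ℝ → ℝ)
    (hL : ∀ x : ℝ, 1 ≤ x →
      Real.exp (-C * (Real.log x) ^ η) ≤ L x ∧ L x ≤ Real.exp (C * (Real.log x) ^ η))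
    (htail : ∀ i, ∀ x : ℝ, 1 ≤ x →
      μ {ω | x < X i ω} = ENNReal.ofReal (L x * x ^ (-(τ - 2)))) :
    μ {ω | ∀ i, X i ω <
        ((m : ℝ) / Real.exp ((2 * C / (τ - 2) ^ η) * (Real.log m) ^ η)) ^ (1 / (τ - 2))}
      ≤ ENNReal.ofReal
          (Real.exp (-(Real.exp ((C / (τ - 2) ^ η) * (Real.log m) ^ η)))) :=
  stmt_8_general μ m hm τ η C hτ1 hη0 hC X hmeas hindep L hL htail
end

section
/- Let D₁*, ..., D_m* be i.i.d. nonnegative integer random variables with P(D* > x) ≤ x^{-(τ-2)} L(x), with τ ∈ (2,3) and L(x) ≤ exp(C(log x)^η), η ∈ (0,1), L nondecreasing. Set M_m = (m·h(m))^{1/(τ-2)} where h(m) = exp((2C'/(τ-2)^η)(log m)^η) for C' ≥ C. Then P(Σ_{i=1}^m D_i* ≥ M_m) ≤ (C''+1) L(M_m)/h(m) for a constant C'' depending only on τ, and consequently P(Σ D_i* ≥ M_m) ≤ K exp(−c (log m)^η) for constants K, c > 0 depending only on τ, C, C', η. -/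
/-!
On the event that some `D_i*` exceeds `M/2`, the union bound gives probability at most
`m L(M) (M/2)^{-(τ-2)} = 2^{τ-2} L(M)/h(m)`, since `M^{τ-2} = m h(m)`. Otherwise every
`D_i*` is an integer below `M`, so `Σ (D_i* - 1) ≥ M - m` forces the level counts
`Σ_i #{k < M : k + 1 < D_i*}` to be at least `M - m`; by Markov's inequality and the tail bound this
has probability at most `m L(M) M^{3-τ} / ((3-τ)(M - m))`, which is again `O(L(M)/h(m))` because
`m/M ≤ 2^{1-1/(τ-2)} < 1`.

For the decay, `log M = (log m + A (log m)^η)/(τ-2)` with `A = 2C'/(τ-2)^η`; subadditivity of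
`x ↦ x^η` and `C ≤ C'` give `C (log M)^η ≤ (3A/4)(log m)^η + O(1)`, so
`L(M)/h(m) = O(exp(-(A/4)(log m)^η))`.
-/

open Real MeasureTheory ProbabilityTheory Finset
open scoped ENNReal

namespace Real

lemma one_sub_mul_add_one_rpow_neg_le {p x : ℝ} (hp0 : 0 ≤ p) (hp1 : p ≤ 1) (hx : 0 ≤ x) :
    (1 - p) * (x + 1) ^ (-p) ≤ (x + 1) ^ (1 - p) - x ^ (1 - p) := by
  have hx1 : 0 < x + 1 := by linarith
  have hbern : (x / (x + 1)) ^ (1 - p) ≤ 1 - (1 - p) / (x + 1) := by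
    have h := rpow_one_add_le_one_add_mul_self (s := -(x + 1)⁻¹)
      (by rw [neg_le_neg_iff]; exact inv_le_one_of_one_le₀ (by linarith)) (p := 1 - p)
      (by linarith) (by linarith)
    convert h using 2
    · field_simp; ring
    · ring
  have hsplit : (x + 1) ^ (1 - p) = (x + 1) * (x + 1) ^ (-p) := by
    rw [sub_eq_add_neg, rpow_add hx1, rpow_one]
  have := mul_le_mul_of_nonneg_right hbern (rpow_nonneg hx1.le (1 - p))
  rw [div_rpow hx hx1.le, div_mul_cancel₀ _ (by positivity), hsplit] at this
  rw [hsplit]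
  calc (1 - p) * (x + 1) ^ (-p) = (1 - p) / (x + 1) * ((x + 1) * (x + 1) ^ (-p)) := by
        field_simp
    _ ≤ _ := by linarith

lemma sum_range_add_one_rpow_neg_le {p : ℝ} (hp0 : 0 ≤ p) (hp1 : p < 1) (N : ℕ) :
    ∑ k ∈ range N, ((k : ℝ) + 1) ^ (-p) ≤ (N : ℝ) ^ (1 - p) / (1 - p) := by
  have hq : 0 < 1 - p := by linarith
  rw [le_div_iff₀ hq, sum_mul]
  calc ∑ k ∈ range N, ((k : ℝ) + 1) ^ (-p) * (1 - p)
      ≤ ∑ k ∈ range N, ((((k + 1 : ℕ) : ℝ)) ^ (1 - p) - (k : ℝ) ^ (1 - p)) := by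
        gcongr with k
        push_cast
        rw [mul_comm]
        exact one_sub_mul_add_one_rpow_neg_le hp0 hp1.le k.cast_nonneg
    _ = (N : ℝ) ^ (1 - p) := by
        rw [sum_range_sub (fun k : ℕ => (k : ℝ) ^ (1 - p))]
        simp [zero_rpow hq.ne']

lemma exists_mul_rpow_le_mul_add {η a B : ℝ} (hη0 : 0 ≤ η) (hη1 : η < 1) (ha : 0 < a)
    (hB : 0 ≤ B) : ∃ K, ∀ s, 0 ≤ s → B * s ^ η ≤ a * s + K := by
  set s₀ := (B / a) ^ (1 - η)⁻¹
  have hs₀ : s₀ ^ (1 - η) = B / a := rpow_inv_rpow (by positivity) (by linarith)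
  refine ⟨B * s₀ ^ η, fun s hs => ?_⟩
  rcases le_total s s₀ with h | h
  · have : B * s ^ η ≤ B * s₀ ^ η := by gcongr
    nlinarith
  · have hsplit : s = s ^ (1 - η) * s ^ η := by
      rw [← rpow_add' hs (by norm_num), sub_add_cancel, rpow_one]
    have : B * s ^ η ≤ a * s := calc
      B * s ^ η = a * s₀ ^ (1 - η) * s ^ η := by rw [hs₀, mul_div_cancel₀ _ ha.ne']
      _ ≤ a * s ^ (1 - η) * s ^ η := by gcongr
      _ = a * s := by rw [mul_assoc, ← hsplit]
    have : 0 ≤ B * s₀ ^ η := by positivity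
    linarith

lemma exists_mul_add_mul_rpow_div_rpow_le {C A p η : ℝ} (hη0 : 0 ≤ η) (hη1 : η < 1) (hp : 0 < p)
    (hA : 0 < A) (hC : 0 ≤ C) (hCA : C / p ^ η ≤ A / 2) :
    ∃ K, ∀ t, 0 ≤ t → C * ((t + A * t ^ η) / p) ^ η ≤ 3 * A / 4 * t ^ η + K := by
  obtain ⟨K, hK⟩ := exists_mul_rpow_le_mul_add hη0 hη1 (a := A / 4) (B := C / p ^ η * A ^ η)
    (by positivity) (by positivity)
  refine ⟨K, fun t ht => ?_⟩
  have hsub : (t + A * t ^ η) ^ η ≤ t ^ η + A ^ η * (t ^ η) ^ η := by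
    rw [← mul_rpow hA.le (by positivity)]
    exact rpow_add_le_add_rpow ht (by positivity) hη0 hη1.le
  calc C * ((t + A * t ^ η) / p) ^ η = C / p ^ η * (t + A * t ^ η) ^ η := by
        rw [div_rpow (by positivity) hp.le]; ring
    _ ≤ C / p ^ η * (t ^ η + A ^ η * (t ^ η) ^ η) := by gcongr
    _ = C / p ^ η * t ^ η + C / p ^ η * A ^ η * (t ^ η) ^ η := by ring
    _ ≤ A / 2 * t ^ η + (A / 4 * t ^ η + K) := by
        gcongr
        exact hK _ (by positivity)
    _ = 3 * A / 4 * t ^ η + K := by ring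

lemma lt_mul_rpow_one_div {p m h : ℝ} (hp0 : 0 < p) (hp1 : p < 1) (hm : 1 < m) (hh : 1 ≤ h) :
    m < (m * h) ^ (1 / p) := calc
  m = m ^ (1 : ℝ) := (rpow_one m).symm
  _ < m ^ (1 / p) := rpow_lt_rpow_of_exponent_lt hm (by rw [lt_div_iff₀ hp0]; linarith)
  _ ≤ (m * h) ^ (1 / p) := by gcongr; exact le_mul_of_one_le_right (by linarith) hh

lemma rpow_one_sub_one_div_lt_one {p x : ℝ} (hp0 : 0 < p) (hp1 : p < 1) (hx : 1 < x) :
    x ^ (1 - 1 / p) < 1 :=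
  rpow_lt_one_of_one_lt_of_neg hx (by rw [sub_neg, lt_div_iff₀ hp0]; linarith)

lemma div_rpow_one_div_le {p m h : ℝ} (hp0 : 0 < p) (hp1 : p < 1) (hm : 2 ≤ m) (hh : 1 ≤ h) :
    m / (m * h) ^ (1 / p) ≤ 2 ^ (1 - 1 / p) := by
  have hm0 : 0 < m := by linarith
  have hexp : 1 - 1 / p ≤ 0 := by
    rw [sub_nonpos, le_div_iff₀ hp0]; linarith
  calc m / (m * h) ^ (1 / p) ≤ m / m ^ (1 / p) := by
        gcongr
        exact le_mul_of_one_le_right hm0.le hh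
    _ = m ^ (1 - 1 / p) := by rw [rpow_sub hm0, rpow_one]
    _ ≤ 2 ^ (1 - 1 / p) := rpow_le_rpow_of_nonpos two_pos hm hexp

lemma exists_mul_rpow_neg_add_div_sub_le {p : ℝ} (hp0 : 0 < p) (hp1 : p < 1) :
    ∃ C'' > 0, ∀ m h : ℝ, 2 ≤ m → 1 ≤ h →
      m * (((m * h) ^ (1 / p)) / 2) ^ (-p) +
        m * (((m * h) ^ (1 / p)) ^ (1 - p) / (1 - p)) / ((m * h) ^ (1 / p) - m) ≤ C'' / h := by
  have hρ1 : 2 ^ (1 - 1 / p) < (1 : ℝ) := rpow_one_sub_one_div_lt_one hp0 hp1 one_lt_two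
  have hq : 0 < (1 - p) * (1 - 2 ^ (1 - 1 / p)) := mul_pos (by linarith) (by linarith)
  refine ⟨2 ^ p + 1 / ((1 - p) * (1 - 2 ^ (1 - 1 / p))), by positivity, fun m h hm hh => ?_⟩
  set M := (m * h) ^ (1 / p)
  have hm0 : 0 < m := by linarith
  have hM0 : 0 < M := by positivity
  have hρ : m / M ≤ 2 ^ (1 - 1 / p) := div_rpow_one_div_le hp0 hp1 hm hh
  have hMp : M ^ p = m * h := by
    simp only [M, one_div]; exact rpow_inv_rpow (by positivity) hp0.ne'
  have hunion : m * (M / 2) ^ (-p) = 2 ^ p / h := by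
    rw [rpow_neg (by positivity), div_rpow hM0.le zero_le_two, hMp]
    field_simp
  have hlevels : m * (M ^ (1 - p) / (1 - p)) / (M - m) = 1 / ((1 - p) * (1 - m / M)) / h := by
    rw [rpow_sub hM0, rpow_one, hMp]
    field_simp
  rw [hunion, hlevels, add_div]
  gcongr

lemma exists_exp_mul_log_rpow_div_exp_le {C A p η : ℝ} (hη0 : 0 ≤ η) (hη1 : η < 1) (hp : 0 < p)
    (hA : 0 < A) (hC : 0 ≤ C) (hCA : C / p ^ η ≤ A / 2) :
    ∃ K > 0, ∀ m : ℝ, 1 ≤ m →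
      exp (C * log ((m * exp (A * log m ^ η)) ^ (1 / p)) ^ η) / exp (A * log m ^ η) ≤
        K * exp (-(A / 4) * log m ^ η) := by
  obtain ⟨K, hK⟩ := exists_mul_add_mul_rpow_div_rpow_le hη0 hη1 hp hA hC hCA
  refine ⟨exp K, exp_pos K, fun m hm => ?_⟩
  have ht : 0 ≤ log m := log_nonneg hm
  rw [log_rpow (by positivity), log_mul (by positivity) (exp_pos _).ne', log_exp, ← exp_sub,
    ← exp_add, one_div_mul_eq_div]
  gcongr
  linarith [hK _ ht]

end Real

lemma ENNReal.ofReal_sub_one_le_sum_ite {n N : ℕ} (hn : n ≤ N + 1) :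
    ENNReal.ofReal ((n : ℝ) - 1) ≤ ∑ k ∈ range N, if (k : ℝ) + 1 < n then 1 else 0 := by
  rw [sum_boole]
  calc ENNReal.ofReal ((n : ℝ) - 1) ≤ ((n - 1 : ℕ) : ℝ≥0∞) := by
        rw [← ENNReal.ofReal_natCast]
        refine ENNReal.ofReal_le_ofReal ?_
        rcases n with _ | n <;> simp
    _ = #(range (n - 1)) := by rw [card_range]
    _ ≤ #{k ∈ range N | ((k : ℕ) : ℝ) + 1 < n} := by
        refine Nat.mono_cast (card_le_card fun k hk => ?_)
        simp only [mem_range, mem_filter] at hk ⊢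
        refine ⟨by omega, ?_⟩
        exact_mod_cast (by omega : k + 1 < n)

section

variable {ι Ω : Type*} [Fintype ι] [MeasurableSpace Ω] {μ : Measure Ω} {X : ι → Ω → ℝ}

lemma measure_sum_ge_le_add (hX : ∀ i, Measurable (X i)) (hnat : ∀ i ω, ∃ n : ℕ, X i ω = n)
    {M : ℝ} (hM : (Fintype.card ι : ℝ) < M) :
    μ {ω | M ≤ ∑ i, X i ω} ≤ ∑ i, μ {ω | M / 2 < X i ω} +
      (∑ i, ∑ k ∈ range ⌊M⌋₊, μ {ω | (k : ℝ) + 1 < X i ω}) /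
        ENNReal.ofReal (M - Fintype.card ι) := by
  have hM0 : 0 < M := lt_of_le_of_lt (Nat.cast_nonneg _) hM
  have hmeas : ∀ i (k : ℕ), MeasurableSet {ω | (k : ℝ) + 1 < X i ω} :=
    fun i k => measurableSet_lt measurable_const (hX i)
  set F : Ω → ℝ≥0∞ := fun ω =>
    ∑ i, ∑ k ∈ range ⌊M⌋₊, {ω | (k : ℝ) + 1 < X i ω}.indicator 1 ω
  have hF : Measurable F := Finset.measurable_sum _ fun i _ =>
    Finset.measurable_sum _ fun k _ => measurable_one.indicator (hmeas i k)
  -- Off the union every `X i` is a natural number `< M`, so `X i - 1` counts the levels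
  -- `k + 1 < X i` with `k < ⌊M⌋₊`: Markov's inequality applies to that count.
  have hsub : {ω | M ≤ ∑ i, X i ω} ⊆
      (⋃ i, {ω | M / 2 < X i ω}) ∪ {ω | ENNReal.ofReal (M - Fintype.card ι) ≤ F ω} := by
    intro ω hω
    by_cases hbig : ∃ i, M / 2 < X i ω
    · exact Or.inl (Set.mem_iUnion.2 hbig)
    right
    simp only [not_exists, not_lt] at hbig
    have hcount : ∀ i, ENNReal.ofReal (X i ω - 1) ≤
        ∑ k ∈ range ⌊M⌋₊, {ω | (k : ℝ) + 1 < X i ω}.indicator 1 ω := by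
      intro i
      obtain ⟨n, hn⟩ := hnat i ω
      simp only [Set.indicator_apply, Set.mem_ofPred_eq, Pi.one_apply, hn]
      refine ENNReal.ofReal_sub_one_le_sum_ite ?_
      have : (n : ℝ) < M := by linarith [hbig i]
      have := Nat.le_floor this.le
      omega
    calc ENNReal.ofReal (M - Fintype.card ι) ≤ ENNReal.ofReal (∑ i, (X i ω - 1)) := by
          refine ENNReal.ofReal_le_ofReal ?_
          rw [sum_sub_distrib, sum_const, card_univ, nsmul_one]
          exact sub_le_sub_right hω _
      _ ≤ ∑ i, ENNReal.ofReal (X i ω - 1) :=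
          le_sum_of_subadditive _ ENNReal.ofReal_zero.le (fun _ _ => ENNReal.ofReal_add_le) _ _
      _ ≤ F ω := sum_le_sum fun i _ => hcount i
  calc μ {ω | M ≤ ∑ i, X i ω}
      ≤ μ (⋃ i, {ω | M / 2 < X i ω}) + μ {ω | ENNReal.ofReal (M - Fintype.card ι) ≤ F ω} :=
        (measure_mono hsub).trans (measure_union_le _ _)
    _ ≤ ∑ i, μ {ω | M / 2 < X i ω} + (∫⁻ ω, F ω ∂μ) / ENNReal.ofReal (M - Fintype.card ι) :=
        add_le_add (measure_iUnion_fintype_le _ _) (meas_ge_le_lintegral_div hF.aemeasurable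
          (by simpa using hM) ENNReal.ofReal_ne_top)
    _ = _ := by
        simp only [F]
        rw [lintegral_finsetSum _ fun i _ => Finset.measurable_sum _ fun k _ =>
          measurable_one.indicator (hmeas i k)]
        simp_rw [lintegral_finsetSum _ fun k _ => measurable_one.indicator (hmeas _ k),
          lintegral_indicator_one (hmeas _ _)]

lemma measure_sum_ge_le_of_tail_le (hX : ∀ i, Measurable (X i))
    (hnat : ∀ i ω, ∃ n : ℕ, X i ω = n) {M p : ℝ} {ℓ : ℝ≥0∞} (hp0 : 0 ≤ p) (hp1 : p < 1)
    (hM : 2 ≤ M) (hcard : (Fintype.card ι : ℝ) < M)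
    (htail : ∀ i x, 1 ≤ x → x ≤ M → μ {ω | x < X i ω} ≤ ℓ * ENNReal.ofReal (x ^ (-p))) :
    μ {ω | M ≤ ∑ i, X i ω} ≤ ℓ * ENNReal.ofReal (Fintype.card ι * (M / 2) ^ (-p) +
      Fintype.card ι * (M ^ (1 - p) / (1 - p)) / (M - Fintype.card ι)) := by
  have hlevels : ∀ i, ∑ k ∈ range ⌊M⌋₊, μ {ω | (k : ℝ) + 1 < X i ω} ≤
      ℓ * ENNReal.ofReal (M ^ (1 - p) / (1 - p)) := fun i => calc
    _ ≤ ∑ k ∈ range ⌊M⌋₊, ℓ * ENNReal.ofReal (((k : ℝ) + 1) ^ (-p)) := by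
        refine sum_le_sum fun k hk => htail i _ (by simp) ?_
        exact_mod_cast (Nat.le_floor_iff (by linarith)).1 (mem_range.1 hk)
    _ = ℓ * ENNReal.ofReal (∑ k ∈ range ⌊M⌋₊, ((k : ℝ) + 1) ^ (-p)) := by
        rw [← mul_sum, ENNReal.ofReal_sum_of_nonneg fun k _ => by positivity]
    _ ≤ ℓ * ENNReal.ofReal (M ^ (1 - p) / (1 - p)) := by
        gcongr
        refine (sum_range_add_one_rpow_neg_le hp0 hp1 _).trans ?_
        gcongr
        exact Nat.floor_le (by linarith)
  refine (measure_sum_ge_le_add hX hnat hcard).trans ?_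
  calc _ ≤ ∑ i : ι, ℓ * ENNReal.ofReal ((M / 2) ^ (-p)) +
        (∑ i : ι, ℓ * ENNReal.ofReal (M ^ (1 - p) / (1 - p))) /
          ENNReal.ofReal (M - Fintype.card ι) := by
        gcongr with i _ i _
        · exact htail i _ (by linarith) (by linarith)
        · exact hlevels i
    _ = _ := by
        have ha : 0 ≤ (M / 2) ^ (-p) := by positivity
        have hb : 0 ≤ M ^ (1 - p) / (1 - p) := div_nonneg (by positivity) (by linarith)
        generalize (M / 2) ^ (-p) = a, M ^ (1 - p) / (1 - p) = b at ha hb ⊢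
        rw [sum_const, sum_const, card_univ, nsmul_eq_mul, nsmul_eq_mul,
          ENNReal.ofReal_add (by positivity) (by positivity),
          ENNReal.ofReal_div_of_pos (by linarith), ENNReal.ofReal_mul (by positivity), ENNReal.ofReal_mul (by positivity),
          ENNReal.ofReal_natCast]
        simp only [div_eq_mul_inv]
        ring

lemma measure_sum_ge_le_of_monotoneOn (hX : ∀ i, Measurable (X i))
    (hnat : ∀ i ω, ∃ n : ℕ, X i ω = n) {L : ℝ → ℝ} (hL : MonotoneOn L (Set.Ici 1)) {M p : ℝ}
    (hp0 : 0 ≤ p) (hp1 : p < 1) (hM : 2 ≤ M) (hcard : (Fintype.card ι : ℝ) < M)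
    (htail : ∀ i x, 1 ≤ x → μ {ω | x < X i ω} ≤ ENNReal.ofReal (L x * x ^ (-p))) :
    μ {ω | M ≤ ∑ i, X i ω} ≤ ENNReal.ofReal (L M) * ENNReal.ofReal
      (Fintype.card ι * (M / 2) ^ (-p) +
        Fintype.card ι * (M ^ (1 - p) / (1 - p)) / (M - Fintype.card ι)) := by
  refine measure_sum_ge_le_of_tail_le hX hnat hp0 hp1 hM hcard fun i x hx hxM => ?_
  rw [← ENNReal.ofReal_mul' (by positivity)]
  refine (htail i x hx).trans (ENNReal.ofReal_le_ofReal ?_)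
  gcongr
  exact hL hx (Set.mem_Ici.2 (hx.trans hxM)) hxM

end

theorem stmt_11 (τ η C C' : ℝ) (hτ1 : 2 < τ) (hτ2 : τ < 3)
    (hη0 : 0 < η) (hη1 : η < 1) (hC : 0 < C) (hCC' : C ≤ C') :
    ∃ C'' > (0 : ℝ), ∃ K > (0 : ℝ), ∃ c₀ > (0 : ℝ),
      ∀ (m : ℕ), 2 ≤ m →
      ∀ {Ω : Type} [MeasurableSpace Ω] (μ : Measure Ω), IsProbabilityMeasure μ →
      ∀ (X : Fin m → Ω → ℝ), (∀ i, Measurable (X i)) →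
        (∀ i ω, 0 ≤ X i ω) → (∀ i ω, ∃ k : ℕ, X i ω = k) →
        iIndepFun X μ →
        (∀ i j, IdentDistrib (X i) (X j) μ μ) →
      ∀ (L : ℝ → ℝ), MonotoneOn L (Set.Ici (1 : ℝ)) →
        (∀ x : ℝ, 1 ≤ x → L x ≤ Real.exp (C * (Real.log x) ^ η)) →
        (∀ i, ∀ x : ℝ, 1 ≤ x →
          μ {ω | x < X i ω} ≤ ENNReal.ofReal (L x * x ^ (-(τ - 2)))) →
        -- M_m = (m h(m))^{1/(τ-2)} with h(m) = exp((2C'/(τ-2)^η)(log m)^η)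
        μ {ω | ((m : ℝ) * Real.exp ((2 * C' / (τ - 2) ^ η) * (Real.log m) ^ η)) ^ (1 / (τ - 2))
                ≤ ∑ i, X i ω}
          ≤ ENNReal.ofReal ((C'' + 1) *
              L (((m : ℝ) * Real.exp ((2 * C' / (τ - 2) ^ η) * (Real.log m) ^ η)) ^ (1 / (τ - 2))) /
              Real.exp ((2 * C' / (τ - 2) ^ η) * (Real.log m) ^ η)) ∧
        μ {ω | ((m : ℝ) * Real.exp ((2 * C' / (τ - 2) ^ η) * (Real.log m) ^ η)) ^ (1 / (τ - 2))
                ≤ ∑ i, X i ω}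
          ≤ ENNReal.ofReal (K * Real.exp (-c₀ * (Real.log m) ^ η)) := by
  set p := τ - 2
  have hp0 : 0 < p := by linarith
  have hp1 : p < 1 := by linarith
  set A := 2 * C' / p ^ η
  have hA : 0 < A := by have : 0 < C' := hC.trans_le hCC'; positivity
  obtain ⟨C'', hC'', hbound⟩ := Real.exists_mul_rpow_neg_add_div_sub_le hp0 hp1
  obtain ⟨K, hK, hdecay⟩ := Real.exists_exp_mul_log_rpow_div_exp_le hη0.le hη1 hp0 hA hC.le
    (calc C / p ^ η ≤ C' / p ^ η := by gcongr
      _ = A / 2 := by ring)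
  refine ⟨C'', hC'', (C'' + 1) * K, by positivity, A / 4, by positivity, ?_⟩
  intro m hm Ω _ μ _ X hX _ hnat _ _ L hL hLexp htail
  set h := exp (A * log m ^ η)
  set M := ((m : ℝ) * h) ^ (1 / p)
  have hm2 : (2 : ℝ) ≤ m := by exact_mod_cast hm
  have hh : 1 ≤ h := one_le_exp (by have := log_nonneg (by linarith : (1 : ℝ) ≤ m); positivity)
  have hmM : (m : ℝ) < M := Real.lt_mul_rpow_one_div hp0 hp1 (by linarith) hh
  have hfirst : μ {ω | M ≤ ∑ i, X i ω} ≤ ENNReal.ofReal ((C'' + 1) * L M / h) := calc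
    _ ≤ ENNReal.ofReal (L M) * ENNReal.ofReal (m * (M / 2) ^ (-p) +
          m * (M ^ (1 - p) / (1 - p)) / (M - m)) := by
        simpa using measure_sum_ge_le_of_monotoneOn hX hnat hL hp0.le hp1 (by linarith)
          (by simpa) htail
    _ ≤ ENNReal.ofReal (L M) * ENNReal.ofReal ((C'' + 1) / h) := by
        gcongr
        exact (hbound m h hm2 hh).trans (div_le_div_of_nonneg_right (by linarith) (by positivity))
    _ = ENNReal.ofReal ((C'' + 1) * L M / h) := by
        rw [← ENNReal.ofReal_mul' (by positivity)]; ring_nf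
  refine ⟨hfirst, hfirst.trans (ENNReal.ofReal_le_ofReal ?_)⟩
  calc (C'' + 1) * L M / h ≤ (C'' + 1) * (exp (C * log M ^ η) / h) := by
        rw [mul_div_assoc]
        gcongr
        exact hLexp M (by linarith)
    _ ≤ (C'' + 1) * (K * exp (-(A / 4) * log m ^ η)) := by
        gcongr
        exact hdecay m (by linarith)
    _ = (C'' + 1) * K * exp (-(A / 4) * log m ^ η) := by ring
end
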